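/- arXiv:1712.00417 — 2 statements merged into one kernel-verified Lean document; each statement's English description precedes it below -/
import Mathlib

section
/- Let φ̃(z) = k²·sn z·cn z·(K·E(z,k) − E·z) + (E − K)·dn z + k²·K·cn²z·dn z. Then L₊[φ̃] = 2((k²−2)E − 2(k²−1)K)·dn z, and consequently L₋L₊[φ̃] = 0. -/
open MeasureTheory

/-- Complete elliptic integral of the first kind. -/
noncomputable def ellipticK (k : ℝ) : ℝ :=
  ∫ θ in (0:ℝ)..(Real.pi / 2), 1 / Real.sqrt (1 - k ^ 2 * Real.sin θ ^ 2)

/-- Complete elliptic integral of the second kind. -/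
noncomputable def ellipticE (k : ℝ) : ℝ :=
  ∫ θ in (0:ℝ)..(Real.pi / 2), Real.sqrt (1 - k ^ 2 * Real.sin θ ^ 2)

/-- The operator L₋f = −f'' − (2 dn²z + k² − 2)f. -/
noncomputable def Lm (k : ℝ) (dn : ℝ → ℝ) (f : ℝ → ℝ) : ℝ → ℝ :=
  fun z => -(deriv (deriv f) z) - (2 * dn z ^ 2 + k ^ 2 - 2) * f z

/-- The operator L₊f = −f'' − (6 dn²z + k² − 2)f. -/
noncomputable def Lp (k : ℝ) (dn : ℝ → ℝ) (f : ℝ → ℝ) : ℝ → ℝ :=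
  fun z => -(deriv (deriv f) z) - (6 * dn z ^ 2 + k ^ 2 - 2) * f z

/-! `sn`, `cn`, `dn` are only used through the first-order system
`sn' = cn dn`, `cn' = -sn dn`, `dn' = -k² sn cn`, which forces `sn² + cn² = 1` and
`dn² + k² sn² = 1`.  The function `W z = K ∫₀ᶻ dn² - E z` enters `φ̃` only through
`W' = K dn² - E`, so differentiating twice expresses `L₊ φ̃` as a polynomial in
`sn, cn, dn, W`, which reduces to `2((k²-2)E - 2(k²-1)K) dn` modulo the two quadratic
relations; this holds for arbitrary constants `K`, `E`.  Finally `dn` lies in the kernel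
of `L₋`, since `dn'' = -(2 dn² + k² - 2) dn`. -/

theorem deriv_deriv_eq_of_hasDerivAt {f f' : ℝ → ℝ} {f'' : ℝ} {z : ℝ}
    (hf : ∀ x, HasDerivAt f (f' x) x) (hf' : HasDerivAt f' f'' z) :
    deriv (deriv f) z = f'' := by
  rw [funext fun x => (hf x).deriv]
  exact hf'.deriv

theorem eq_of_forall_hasDerivAt_zero {f : ℝ → ℝ} (hf : ∀ x, HasDerivAt f 0 x) (z : ℝ) :
    f z = f 0 :=
  is_const_of_deriv_eq_zero (fun x => (hf x).differentiableAt) (fun x => (hf x).deriv) z 0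

/-- `φ̃` with `K·E(z,k) - E·z` replaced by an arbitrary function `W`. -/
noncomputable def phiTilde (k K E : ℝ) (sn cn dn W : ℝ → ℝ) (z : ℝ) : ℝ :=
  k ^ 2 * sn z * cn z * W z + (E - K) * dn z + k ^ 2 * K * cn z ^ 2 * dn z

structure IsJacobiSystem (k : ℝ) (sn cn dn : ℝ → ℝ) : Prop where
  hasDerivAt_sn : ∀ z, HasDerivAt sn (cn z * dn z) z
  hasDerivAt_cn : ∀ z, HasDerivAt cn (-(sn z * dn z)) z
  hasDerivAt_dn : ∀ z, HasDerivAt dn (-(k ^ 2 * sn z * cn z)) z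

namespace IsJacobiSystem

variable {k : ℝ} {sn cn dn : ℝ → ℝ}

theorem sn_sq_add_cn_sq (h : IsJacobiSystem k sn cn dn) (hsn0 : sn 0 = 0) (hcn0 : cn 0 = 1)
    (z : ℝ) : sn z ^ 2 + cn z ^ 2 = 1 := by
  have hconst : ∀ x, HasDerivAt (fun x => sn x ^ 2 + cn x ^ 2) 0 x := fun x =>
    (((h.hasDerivAt_sn x).pow 2).add ((h.hasDerivAt_cn x).pow 2)).congr_deriv (by ring)
  simpa [hsn0, hcn0] using eq_of_forall_hasDerivAt_zero hconst z

theorem dn_sq_add_sq_mul_sn_sq (h : IsJacobiSystem k sn cn dn) (hsn0 : sn 0 = 0)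
    (hdn0 : dn 0 = 1) (z : ℝ) : dn z ^ 2 + k ^ 2 * sn z ^ 2 = 1 := by
  have hconst : ∀ x, HasDerivAt (fun x => dn x ^ 2 + k ^ 2 * sn x ^ 2) 0 x := fun x =>
    (((h.hasDerivAt_dn x).pow 2).add (((h.hasDerivAt_sn x).pow 2).const_mul (k ^ 2))).congr_deriv
      (by ring)
  simpa [hsn0, hdn0] using eq_of_forall_hasDerivAt_zero hconst z

theorem continuous_dn (h : IsJacobiSystem k sn cn dn) : Continuous dn :=
  continuous_iff_continuousAt.2 fun z => (h.hasDerivAt_dn z).continuousAt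

theorem Lm_const_mul_dn_eq_zero (h : IsJacobiSystem k sn cn dn) (hsn0 : sn 0 = 0)
    (hcn0 : cn 0 = 1) (hdn0 : dn 0 = 1) (C z : ℝ) : Lm k dn (fun x => C * dn x) z = 0 := by
  have hdn'' : HasDerivAt (fun x => C * -(k ^ 2 * sn x * cn x))
      (C * -(k ^ 2 * (cn z ^ 2 - sn z ^ 2) * dn z)) z :=
    ((((h.hasDerivAt_sn z).const_mul (k ^ 2)).mul (h.hasDerivAt_cn z)).neg.const_mul C).congr_deriv
      (by ring)
  simp only [Lm, deriv_deriv_eq_of_hasDerivAt (fun x => (h.hasDerivAt_dn x).const_mul C) hdn'']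
  linear_combination (C * k ^ 2 * dn z) * h.sn_sq_add_cn_sq hsn0 hcn0 z
    - (2 * C * dn z) * h.dn_sq_add_sq_mul_sn_sq hsn0 hdn0 z

theorem hasDerivAt_phiTilde (h : IsJacobiSystem k sn cn dn) (hsn0 : sn 0 = 0)
    (hdn0 : dn 0 = 1) {K E : ℝ} {W : ℝ → ℝ} (hW : ∀ z, HasDerivAt W (K * dn z ^ 2 - E) z)
    (z : ℝ) :
    HasDerivAt (phiTilde k K E sn cn dn W)
      (k ^ 2 * (cn z ^ 2 - sn z ^ 2) * (dn z * W z - k ^ 2 * K * sn z * cn z)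
        - 2 * k ^ 2 * E * sn z * cn z) z := by
  have hsn := h.hasDerivAt_sn z
  have hcn := h.hasDerivAt_cn z
  have hdn := h.hasDerivAt_dn z
  exact (((((hsn.const_mul (k ^ 2)).mul hcn).mul (hW z)).add (hdn.const_mul (E - K))).add
    (((hcn.pow 2).const_mul (k ^ 2 * K)).mul hdn)).congr_deriv
    (by simp only [Pi.mul_apply, Pi.pow_apply]
        linear_combination (-(k ^ 2 * K * sn z * cn z)) * h.dn_sq_add_sq_mul_sn_sq hsn0 hdn0 z)

theorem Lp_phiTilde (h : IsJacobiSystem k sn cn dn) (hsn0 : sn 0 = 0) (hcn0 : cn 0 = 1)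
    (hdn0 : dn 0 = 1) {K E : ℝ} {W : ℝ → ℝ} (hW : ∀ z, HasDerivAt W (K * dn z ^ 2 - E) z)
    (z : ℝ) :
    Lp k dn (phiTilde k K E sn cn dn W) z =
      2 * ((k ^ 2 - 2) * E - 2 * (k ^ 2 - 1) * K) * dn z := by
  have hsn := h.hasDerivAt_sn z
  have hcn := h.hasDerivAt_cn z
  have hdn := h.hasDerivAt_dn z
  have hφ'' : HasDerivAt (fun x => k ^ 2 * (cn x ^ 2 - sn x ^ 2) *
        (dn x * W x - k ^ 2 * K * sn x * cn x) - 2 * k ^ 2 * E * sn x * cn x)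
      (k ^ 2 * (-4 * sn z * cn z * dn z * (dn z * W z - k ^ 2 * K * sn z * cn z)
        + (cn z ^ 2 - sn z ^ 2) * (-(k ^ 2 * sn z * cn z * W z) + dn z * (K * dn z ^ 2 - E)
          - k ^ 2 * K * (cn z ^ 2 - sn z ^ 2) * dn z))
        - 2 * k ^ 2 * E * (cn z ^ 2 - sn z ^ 2) * dn z) z :=
    ((((hcn.pow 2).sub (hsn.pow 2)).const_mul (k ^ 2)).mul ((hdn.mul (hW z)).sub
      ((hsn.const_mul (k ^ 2 * K)).mul hcn))).sub ((hsn.const_mul (2 * k ^ 2 * E)).mul hcn)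
      |>.congr_deriv (by simp only [Pi.mul_apply, Pi.sub_apply, Pi.pow_apply]; ring)
  simp only [_root_.Lp, deriv_deriv_eq_of_hasDerivAt (h.hasDerivAt_phiTilde hsn0 hdn0 hW) hφ'']
  unfold phiTilde
  linear_combination
    (k ^ 2 * dn z * (3 * E - 5 * K + k ^ 2 * K * cn z ^ 2) + k ^ 4 * sn z * cn z * W z)
      * h.sn_sq_add_cn_sq hsn0 hcn0 z
    + (-6 * (E - K) * dn z - 2 * k ^ 2 * sn z * cn z * W z
      + k ^ 2 * K * dn z * (sn z ^ 2 - 7 * cn z ^ 2)) * h.dn_sq_add_sq_mul_sn_sq hsn0 hdn0 z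

end IsJacobiSystem

theorem stmt_4_general (k : ℝ)
    (sn cn dn : ℝ → ℝ)
    (hsn0 : sn 0 = 0) (hcn0 : cn 0 = 1) (hdn0 : dn 0 = 1)
    (hsn' : ∀ z, HasDerivAt sn (cn z * dn z) z)
    (hcn' : ∀ z, HasDerivAt cn (-(sn z * dn z)) z)
    (hdn' : ∀ z, HasDerivAt dn (-(k ^ 2 * sn z * cn z)) z)
    (φt : ℝ → ℝ)
    (hφt : ∀ z, φt z = k ^ 2 * sn z * cn z *
        (ellipticK k * (∫ y in (0:ℝ)..z, dn y ^ 2) - ellipticE k * z)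
      + (ellipticE k - ellipticK k) * dn z + k ^ 2 * ellipticK k * cn z ^ 2 * dn z) :
    (∀ z, Lp k dn φt z =
      2 * ((k ^ 2 - 2) * ellipticE k - 2 * (k ^ 2 - 1) * ellipticK k) * dn z) ∧
    (∀ z, Lm k dn (Lp k dn φt) z = 0) := by
  have h : IsJacobiSystem k sn cn dn := ⟨hsn', hcn', hdn'⟩
  have hW : ∀ z, HasDerivAt
      (fun t => ellipticK k * (∫ y in (0:ℝ)..t, dn y ^ 2) - ellipticE k * t)
      (ellipticK k * dn z ^ 2 - ellipticE k) z := fun z =>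
    ((((h.continuous_dn.pow 2).integral_hasStrictDerivAt 0 z).hasDerivAt.const_mul _).sub
      ((hasDerivAt_id z).const_mul _)).congr_deriv (by simp only [Pi.pow_apply]; ring)
  have hφ : φt = phiTilde k (ellipticK k) (ellipticE k) sn cn dn
      (fun t => ellipticK k * (∫ y in (0:ℝ)..t, dn y ^ 2) - ellipticE k * t) := funext hφt
  have hLp : ∀ z, Lp k dn φt z =
      2 * ((k ^ 2 - 2) * ellipticE k - 2 * (k ^ 2 - 1) * ellipticK k) * dn z :=
    hφ ▸ h.Lp_phiTilde hsn0 hcn0 hdn0 hW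
  refine ⟨hLp, fun z => ?_⟩
  rw [funext hLp]
  exact h.Lm_const_mul_dn_eq_zero hsn0 hcn0 hdn0 _ z

/-- with φ̃(z) = k²·sn z·cn z·(K·E(z,k) − E·z) + (E − K)·dn z + k²·K·cn²z·dn z,
one has L₊[φ̃] = 2((k²−2)E − 2(k²−1)K)·dn z and hence L₋L₊[φ̃] = 0. -/
theorem stmt_4 (k : ℝ) (hk0 : 0 < k) (hk1 : k < 1)
    (sn cn dn : ℝ → ℝ)
    (hsn0 : sn 0 = 0) (hcn0 : cn 0 = 1) (hdn0 : dn 0 = 1)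
    (hsn' : ∀ z, HasDerivAt sn (cn z * dn z) z)
    (hcn' : ∀ z, HasDerivAt cn (-(sn z * dn z)) z)
    (hdn' : ∀ z, HasDerivAt dn (-(k ^ 2 * sn z * cn z)) z)
    (φt : ℝ → ℝ)
    (hφt : ∀ z, φt z = k ^ 2 * sn z * cn z *
        (ellipticK k * (∫ y in (0:ℝ)..z, dn y ^ 2) - ellipticE k * z)
      + (ellipticE k - ellipticK k) * dn z + k ^ 2 * ellipticK k * cn z ^ 2 * dn z) :
    (∀ z, Lp k dn φt z =
      2 * ((k ^ 2 - 2) * ellipticE k - 2 * (k ^ 2 - 1) * ellipticK k) * dn z) ∧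
    (∀ z, Lm k dn (Lp k dn φt) z = 0) :=
  stmt_4_general k sn cn dn hsn0 hcn0 hdn0 hsn' hcn' hdn' φt hφt
end

section
/- For k ∈ (0,1), the 2K-periodic problem L₊v = 0, where L₊ = −d²/dz² − 6dn²(z|k) − k² + 2, has a one-dimensional solution space on H²_per[0,2K): every 2K-periodic solution is a constant multiple of w(z) = sn(z|k)cn(z|k). -/
open MeasureTheory

/-!
With the amplitude `φ(z) = ∫₀ᶻ dn`, the Jacobi system gives `sn = sin φ`, `cn = cos φ` and
`φ' = dn = Δ(φ)`, `Δ(θ) = √(1 - k² sin² θ)`, so `φ` inverts the incomplete integral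
`F(x) = ∫₀ˣ dθ / Δ(θ)` and `φ(2K) = π`. Hence `sn, cn, dn` take the values `0, -1, 1` at `2K`
and `∫₀^{2K} dn² = 2E`.

Besides `w = sn cn`, the equation `v'' = -(6 dn² + k² - 2) v` has an explicit solution `U` with
Wronskian `W(U, w) = k² - 1 ≠ 0`, whose derivative satisfies
`U'(2K) - U'(0) = 4(1 - k²)K - 2(2 - k²)E < 0` (an integration by parts in `θ`). As `w'` is
`2K`-periodic and `U'` is not, a solution `v = aU + bw` with `2K`-periodic `v'` has `a = 0`.
-/

open Real

noncomputable def ellipticDelta (k θ : ℝ) : ℝ := √(1 - k ^ 2 * sin θ ^ 2)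

noncomputable def ellipticF (k x : ℝ) : ℝ := ∫ θ in (0:ℝ)..x, 1 / ellipticDelta k θ

section EllipticIntegrals

variable {k : ℝ}

lemma one_sub_sq_le_one_sub_sq_mul_sin_sq (θ : ℝ) : 1 - k ^ 2 ≤ 1 - k ^ 2 * sin θ ^ 2 := by
  nlinarith [sin_sq_le_one θ, sq_nonneg k]

lemma ellipticDelta_pos (hk : k ^ 2 < 1) (θ : ℝ) : 0 < ellipticDelta k θ :=
  sqrt_pos.2 (by linarith [one_sub_sq_le_one_sub_sq_mul_sin_sq (k := k) θ])

lemma ellipticDelta_sq (hk : k ^ 2 ≤ 1) (θ : ℝ) :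
    ellipticDelta k θ ^ 2 = 1 - k ^ 2 * sin θ ^ 2 :=
  sq_sqrt (by linarith [one_sub_sq_le_one_sub_sq_mul_sin_sq (k := k) θ])

lemma continuous_ellipticDelta : Continuous (ellipticDelta k) := by
  unfold ellipticDelta
  fun_prop

lemma ellipticDelta_pi_sub (θ : ℝ) : ellipticDelta k (π - θ) = ellipticDelta k θ := by
  simp [ellipticDelta, sin_pi_sub]

lemma hasDerivAt_ellipticDelta (hk : k ^ 2 < 1) (θ : ℝ) :
    HasDerivAt (ellipticDelta k) (-(k ^ 2 * sin θ * cos θ) / ellipticDelta k θ) θ := by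
  refine (((((hasDerivAt_sin θ).fun_pow 2).const_mul (k ^ 2)).const_sub 1).sqrt
    (sqrt_pos.1 (ellipticDelta_pos hk θ)).ne').congr_deriv ?_
  simp only [ellipticDelta]
  field_simp
  ring

lemma integral_zero_pi_eq_two_mul {g : ℝ → ℝ} (hg : Continuous g)
    (hsymm : ∀ θ, g (π - θ) = g θ) :
    ∫ θ in (0:ℝ)..π, g θ = 2 * ∫ θ in (0:ℝ)..(π / 2), g θ := by
  have hreflect : ∫ θ in (π / 2)..π, g θ = ∫ θ in (0:ℝ)..(π / 2), g θ := by
    simpa [hsymm, show π - π / 2 = π / 2 by ring] using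
      (intervalIntegral.integral_comp_sub_left g π (a := 0) (b := π / 2)).symm
  rw [← intervalIntegral.integral_add_adjacent_intervals (b := π / 2)
    (hg.intervalIntegrable _ _) (hg.intervalIntegrable _ _), hreflect]
  ring

lemma continuous_one_div_ellipticDelta (hk : k ^ 2 < 1) :
    Continuous fun θ => 1 / ellipticDelta k θ :=
  continuous_const.div continuous_ellipticDelta fun θ => (ellipticDelta_pos hk θ).ne'

lemma hasDerivAt_ellipticF (hk : k ^ 2 < 1) (x : ℝ) :
    HasDerivAt (ellipticF k) (1 / ellipticDelta k x) x :=
  ((continuous_one_div_ellipticDelta hk).integral_hasStrictDerivAt 0 x).hasDerivAt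

lemma strictMono_ellipticF (hk : k ^ 2 < 1) : StrictMono (ellipticF k) :=
  strictMono_of_hasDerivAt_pos (hasDerivAt_ellipticF hk)
    fun x => one_div_pos.2 (ellipticDelta_pos hk x)

lemma ellipticF_pi (hk : k ^ 2 < 1) : ellipticF k π = 2 * ellipticK k :=
  integral_zero_pi_eq_two_mul (continuous_one_div_ellipticDelta hk)
    fun θ => by rw [ellipticDelta_pi_sub]

lemma integral_ellipticDelta_zero_pi : ∫ θ in (0:ℝ)..π, ellipticDelta k θ = 2 * ellipticE k :=
  integral_zero_pi_eq_two_mul continuous_ellipticDelta ellipticDelta_pi_sub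

lemma hasDerivAt_sin_mul_cos_div_ellipticDelta (hk : k ^ 2 < 1) (θ : ℝ) :
    HasDerivAt (fun θ => k ^ 2 * (sin θ * cos θ) / ellipticDelta k θ)
      ((2 - k ^ 2) * ellipticDelta k θ - 2 * (1 - k ^ 2) * (1 / ellipticDelta k θ)
        - k ^ 4 * (1 - k ^ 2) * (sin θ ^ 4 / ellipticDelta k θ ^ 3)) θ := by
  have hΔ := (ellipticDelta_pos hk θ).ne'
  have hΔsq := ellipticDelta_sq hk.le θ
  refine ((((hasDerivAt_sin θ).fun_mul (hasDerivAt_cos θ)).const_mul (k ^ 2)).div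
    (hasDerivAt_ellipticDelta hk θ) hΔ).congr_deriv ?_
  field_simp
  ring_nf
  linear_combination (k ^ 2 * (1 - 2 * sin θ ^ 2) - (2 - k ^ 2) *
      (ellipticDelta k θ ^ 2 + 1 - k ^ 2 * sin θ ^ 2) + 2 * (1 - k ^ 2)) * hΔsq
    + (k ^ 2 * ellipticDelta k θ ^ 2 + k ^ 4 * sin θ ^ 2) * sin_sq_add_cos_sq θ

lemma continuous_sin_pow_four_div_ellipticDelta_cube (hk : k ^ 2 < 1) :
    Continuous fun θ => sin θ ^ 4 / ellipticDelta k θ ^ 3 :=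
  (continuous_sin.pow 4).div (continuous_ellipticDelta.pow 3)
    fun θ => pow_ne_zero 3 (ellipticDelta_pos hk θ).ne'

/-- Integrating the derivative above over `[0, π/2]`, where `sin θ cos θ` vanishes at both ends. -/
lemma ellipticE_sub_ellipticK (hk : k ^ 2 < 1) :
    (2 - k ^ 2) * ellipticE k - 2 * (1 - k ^ 2) * ellipticK k
      = k ^ 4 * (1 - k ^ 2) * ∫ θ in (0:ℝ)..(π / 2), sin θ ^ 4 / ellipticDelta k θ ^ 3 := by
  have h₁ : Continuous fun θ => (2 - k ^ 2) * ellipticDelta k θ :=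
    continuous_const.mul continuous_ellipticDelta
  have h₂ : Continuous fun θ => 2 * (1 - k ^ 2) * (1 / ellipticDelta k θ) :=
    continuous_const.mul (continuous_one_div_ellipticDelta hk)
  have h₃ : Continuous fun θ => k ^ 4 * (1 - k ^ 2) * (sin θ ^ 4 / ellipticDelta k θ ^ 3) :=
    continuous_const.mul (continuous_sin_pow_four_div_ellipticDelta_cube hk)
  have hftc := intervalIntegral.integral_eq_sub_of_hasDerivAt (a := 0) (b := π / 2)
    (fun θ _ => hasDerivAt_sin_mul_cos_div_ellipticDelta hk θ)
    (((h₁.intervalIntegrable _ _).sub (h₂.intervalIntegrable _ _)).sub (h₃.intervalIntegrable _ _))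
  rw [intervalIntegral.integral_sub ((h₁.intervalIntegrable _ _).sub (h₂.intervalIntegrable _ _))
      (h₃.intervalIntegrable _ _),
    intervalIntegral.integral_sub (h₁.intervalIntegrable _ _) (h₂.intervalIntegrable _ _),
    intervalIntegral.integral_const_mul, intervalIntegral.integral_const_mul,
    intervalIntegral.integral_const_mul, cos_pi_div_two, sin_zero] at hftc
  simp only [mul_zero, zero_mul, zero_div, sub_zero] at hftc
  have hE : ellipticE k = ∫ θ in (0:ℝ)..(π / 2), ellipticDelta k θ := rfl
  have hK : ellipticK k = ∫ θ in (0:ℝ)..(π / 2), 1 / ellipticDelta k θ := rfl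
  rw [hE, hK]
  linear_combination hftc

lemma two_mul_one_sub_sq_mul_ellipticK_lt (hk0 : k ≠ 0) (hk : k ^ 2 < 1) :
    2 * (1 - k ^ 2) * ellipticK k < (2 - k ^ 2) * ellipticE k := by
  have hpos : 0 < ∫ θ in (0:ℝ)..(π / 2), sin θ ^ 4 / ellipticDelta k θ ^ 3 := by
    refine intervalIntegral.intervalIntegral_pos_of_pos_on
      ((continuous_sin_pow_four_div_ellipticDelta_cube hk).intervalIntegrable _ _)
      (fun x hx => div_pos (pow_pos (sin_pos_of_pos_of_lt_pi hx.1 (by linarith [hx.2, pi_pos])) 4)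
        (pow_pos (ellipticDelta_pos hk x) 3)) (by linarith [pi_pos])
  have := ellipticE_sub_ellipticK hk
  have : 0 < k ^ 4 * (1 - k ^ 2) := mul_pos (by positivity) (by linarith)
  nlinarith

end EllipticIntegrals

lemma eq_of_hasDerivAt_zero {f : ℝ → ℝ} (hf : ∀ z, HasDerivAt f 0 z) (x y : ℝ) : f x = f y :=
  is_const_of_deriv_eq_zero (fun z => (hf z).differentiableAt) (fun z => (hf z).deriv) x y

structure IsJacobiElliptic (k : ℝ) (sn cn dn : ℝ → ℝ) : Prop where
  sn_zero : sn 0 = 0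
  cn_zero : cn 0 = 1
  dn_zero : dn 0 = 1
  hasDerivAt_sn : ∀ z, HasDerivAt sn (cn z * dn z) z
  hasDerivAt_cn : ∀ z, HasDerivAt cn (-(sn z * dn z)) z
  hasDerivAt_dn : ∀ z, HasDerivAt dn (-(k ^ 2 * sn z * cn z)) z

noncomputable def amplitude (dn : ℝ → ℝ) (z : ℝ) : ℝ := ∫ t in (0:ℝ)..z, dn t

namespace IsJacobiElliptic

variable {k : ℝ} {sn cn dn : ℝ → ℝ}

lemma sn_sq_add_cn_sq (h : IsJacobiElliptic k sn cn dn) (z : ℝ) : sn z ^ 2 + cn z ^ 2 = 1 := by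
  have hconst := eq_of_hasDerivAt_zero (f := fun z => sn z ^ 2 + cn z ^ 2)
    (fun z => (((h.hasDerivAt_sn z).fun_pow 2).add ((h.hasDerivAt_cn z).fun_pow 2)).congr_deriv
      (by ring)) z 0
  simpa [h.sn_zero, h.cn_zero] using hconst

lemma dn_sq (h : IsJacobiElliptic k sn cn dn) (z : ℝ) : dn z ^ 2 = 1 - k ^ 2 * sn z ^ 2 := by
  have hconst := eq_of_hasDerivAt_zero (f := fun z => dn z ^ 2 + k ^ 2 * sn z ^ 2)
    (fun z => (((h.hasDerivAt_dn z).fun_pow 2).add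
      (((h.hasDerivAt_sn z).fun_pow 2).const_mul (k ^ 2))).congr_deriv (by ring)) z 0
  simp only [h.sn_zero, h.dn_zero] at hconst
  linarith

lemma continuous_dn (h : IsJacobiElliptic k sn cn dn) : Continuous dn :=
  continuous_iff_continuousAt.2 fun z => (h.hasDerivAt_dn z).continuousAt

/-- `dn` never vanishes, since `dn² ≥ 1 - k²`, so it keeps the sign of `dn 0 = 1`. -/
lemma dn_pos (h : IsJacobiElliptic k sn cn dn) (hk : k ^ 2 < 1) (z : ℝ) : 0 < dn z := by
  by_contra! hle
  obtain ⟨c, -, hc⟩ := intermediate_value_uIcc (a := 0) (b := z) h.continuous_dn.continuousOn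
    (Set.mem_uIcc.2 (Or.inr ⟨hle, by rw [h.dn_zero]; norm_num⟩))
  have := h.dn_sq c
  nlinarith [h.sn_sq_add_cn_sq c, sq_nonneg (cn c), sq_nonneg k]

lemma hasDerivAt_amplitude (h : IsJacobiElliptic k sn cn dn) (z : ℝ) :
    HasDerivAt (amplitude dn) (dn z) z :=
  (h.continuous_dn.integral_hasStrictDerivAt 0 z).hasDerivAt

lemma amplitude_zero : amplitude dn 0 = 0 := intervalIntegral.integral_same

lemma sn_mul_cos_sub_cn_mul_sin (h : IsJacobiElliptic k sn cn dn) (z : ℝ) :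
    sn z * cos (amplitude dn z) - cn z * sin (amplitude dn z) = 0 := by
  have hconst := eq_of_hasDerivAt_zero
    (f := fun z => sn z * cos (amplitude dn z) - cn z * sin (amplitude dn z))
    (fun z => (((h.hasDerivAt_sn z).fun_mul ((h.hasDerivAt_amplitude z).cos)).sub
      ((h.hasDerivAt_cn z).fun_mul ((h.hasDerivAt_amplitude z).sin))).congr_deriv (by ring)) z 0
  simpa [amplitude_zero, h.sn_zero] using hconst

lemma sn_mul_sin_add_cn_mul_cos (h : IsJacobiElliptic k sn cn dn) (z : ℝ) :
    sn z * sin (amplitude dn z) + cn z * cos (amplitude dn z) = 1 := by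
  have hconst := eq_of_hasDerivAt_zero
    (f := fun z => sn z * sin (amplitude dn z) + cn z * cos (amplitude dn z))
    (fun z => (((h.hasDerivAt_sn z).fun_mul ((h.hasDerivAt_amplitude z).sin)).add
      ((h.hasDerivAt_cn z).fun_mul ((h.hasDerivAt_amplitude z).cos))).congr_deriv (by ring)) z 0
  simpa [amplitude_zero, h.sn_zero, h.cn_zero] using hconst

lemma sn_eq_sin_amplitude (h : IsJacobiElliptic k sn cn dn) (z : ℝ) :
    sn z = sin (amplitude dn z) := by
  linear_combination cos (amplitude dn z) * h.sn_mul_cos_sub_cn_mul_sin z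
    + sin (amplitude dn z) * h.sn_mul_sin_add_cn_mul_cos z
    - sn z * sin_sq_add_cos_sq (amplitude dn z)

lemma cn_eq_cos_amplitude (h : IsJacobiElliptic k sn cn dn) (z : ℝ) :
    cn z = cos (amplitude dn z) := by
  linear_combination -sin (amplitude dn z) * h.sn_mul_cos_sub_cn_mul_sin z
    + cos (amplitude dn z) * h.sn_mul_sin_add_cn_mul_cos z
    - cn z * sin_sq_add_cos_sq (amplitude dn z)

lemma dn_eq_ellipticDelta_amplitude (h : IsJacobiElliptic k sn cn dn) (hk : k ^ 2 < 1) (z : ℝ) :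
    dn z = ellipticDelta k (amplitude dn z) := by
  refine (sq_eq_sq₀ (h.dn_pos hk z).le (ellipticDelta_pos hk _).le).1 ?_
  rw [h.dn_sq, ellipticDelta_sq hk.le, h.sn_eq_sin_amplitude]

lemma ellipticF_amplitude (h : IsJacobiElliptic k sn cn dn) (hk : k ^ 2 < 1) (z : ℝ) :
    ellipticF k (amplitude dn z) = z := by
  have hconst := eq_of_hasDerivAt_zero (f := fun z => ellipticF k (amplitude dn z) - z)
    (fun z => (((hasDerivAt_ellipticF hk _).comp z (h.hasDerivAt_amplitude z)).sub
      (hasDerivAt_id z)).congr_deriv (by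
        rw [h.dn_eq_ellipticDelta_amplitude hk z, one_div_mul_cancel (ellipticDelta_pos hk _).ne',
          sub_self])) z 0
  have hF0 : ellipticF k 0 = 0 := intervalIntegral.integral_same
  simp only [amplitude_zero, hF0, sub_zero] at hconst
  linarith

lemma amplitude_two_mul_ellipticK (h : IsJacobiElliptic k sn cn dn) (hk : k ^ 2 < 1) :
    amplitude dn (2 * ellipticK k) = π :=
  (strictMono_ellipticF hk).injective (by rw [h.ellipticF_amplitude hk, ellipticF_pi hk])

lemma sn_two_mul_ellipticK (h : IsJacobiElliptic k sn cn dn) (hk : k ^ 2 < 1) :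
    sn (2 * ellipticK k) = 0 := by
  rw [h.sn_eq_sin_amplitude, h.amplitude_two_mul_ellipticK hk, sin_pi]

lemma cn_two_mul_ellipticK (h : IsJacobiElliptic k sn cn dn) (hk : k ^ 2 < 1) :
    cn (2 * ellipticK k) = -1 := by
  rw [h.cn_eq_cos_amplitude, h.amplitude_two_mul_ellipticK hk, cos_pi]

lemma dn_two_mul_ellipticK (h : IsJacobiElliptic k sn cn dn) (hk : k ^ 2 < 1) :
    dn (2 * ellipticK k) = 1 := by
  rw [h.dn_eq_ellipticDelta_amplitude hk, h.amplitude_two_mul_ellipticK hk]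
  simp [ellipticDelta]

lemma integral_dn_sq_two_mul_ellipticK (h : IsJacobiElliptic k sn cn dn) (hk : k ^ 2 < 1) :
    ∫ t in (0:ℝ)..(2 * ellipticK k), dn t ^ 2 = 2 * ellipticE k := by
  have hsubst := intervalIntegral.integral_comp_mul_deriv (a := 0) (b := 2 * ellipticK k)
    (fun z _ => h.hasDerivAt_amplitude z) h.continuous_dn.continuousOn
    (continuous_ellipticDelta (k := k))
  rw [amplitude_zero, h.amplitude_two_mul_ellipticK hk, integral_ellipticDelta_zero_pi] at hsubst
  rw [← hsubst]
  refine intervalIntegral.integral_congr fun z _ => ?_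
  simp only [Function.comp_apply, ← h.dn_eq_ellipticDelta_amplitude hk z, sq]

end IsJacobiElliptic

structure IsHillSolution (q y y' : ℝ → ℝ) : Prop where
  hasDerivAt : ∀ z, HasDerivAt y (y' z) z
  hasDerivAt_deriv : ∀ z, HasDerivAt y' (q z * y z) z

namespace IsHillSolution

variable {q u u' w w' v v' : ℝ → ℝ}

lemma of_contDiff (hv : ContDiff ℝ 2 v) (hsol : ∀ z, deriv (deriv v) z = q z * v z) :
    IsHillSolution q v (deriv v) where
  hasDerivAt z := ((hv.differentiable (by norm_num)) z).hasDerivAt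
  hasDerivAt_deriv z := by
    rw [← hsol z]
    exact ((hv.deriv' (n := 1)).differentiable (by norm_num) z).hasDerivAt

lemma wronskian_eq (hu : IsHillSolution q u u') (hw : IsHillSolution q w w') (z : ℝ) :
    u z * w' z - u' z * w z = u 0 * w' 0 - u' 0 * w 0 :=
  eq_of_hasDerivAt_zero (fun z => (((hu.hasDerivAt z).fun_mul (hw.hasDerivAt_deriv z)).sub
    ((hu.hasDerivAt_deriv z).fun_mul (hw.hasDerivAt z))).congr_deriv (by ring)) z 0

/-- Writing `v = a u + b w` with `u, w` independent, periodicity of `v'` and `w'` together with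
non-periodicity of `u'` forces `a = 0`. -/
lemma exists_eq_const_mul (hu : IsHillSolution q u u') (hw : IsHillSolution q w w')
    (hv : IsHillSolution q v v') {T : ℝ} (hW : u 0 * w' 0 - u' 0 * w 0 ≠ 0)
    (hvT : v' T = v' 0) (hwT : w' T = w' 0) (huT : u' T ≠ u' 0) :
    ∃ c, ∀ z, v z = c * w z := by
  set W := u 0 * w' 0 - u' 0 * w 0
  set a := v 0 * w' 0 - v' 0 * w 0
  set b := v 0 * u' 0 - v' 0 * u 0
  have hrepr : ∀ z, W * v z = a * u z - b * w z ∧ W * v' z = a * u' z - b * w' z := by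
    intro z
    have hvw := hv.wronskian_eq hw z
    have hvu := hv.wronskian_eq hu z
    have huw := hu.wronskian_eq hw z
    constructor
    · linear_combination (-v z) * huw + u z * hvw - w z * hvu
    · linear_combination (-v' z) * huw + u' z * hvw - w' z * hvu
  have ha : a = 0 := by
    have hdiff : a * (u' T - u' 0) = 0 := by
      linear_combination (hrepr 0).2 - (hrepr T).2 + W * hvT + b * hwT
    exact (mul_eq_zero.1 hdiff).resolve_right (sub_ne_zero.2 huT)
  refine ⟨-b / W, fun z => ?_⟩
  rw [div_mul_eq_mul_div, eq_div_iff hW]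
  linear_combination (hrepr z).1 + u z * ha

end IsHillSolution

noncomputable def lpPotential (k : ℝ) (dn : ℝ → ℝ) (z : ℝ) : ℝ := -(6 * dn z ^ 2 + k ^ 2 - 2)

lemma Lp_eq_zero_iff {k : ℝ} {dn f : ℝ → ℝ} {z : ℝ} :
    _root_.Lp k dn f z = 0 ↔ deriv (deriv f) z = lpPotential k dn z * f z := by
  simp only [_root_.Lp, lpPotential]
  constructor <;> intro h <;> linarith

noncomputable def jacobiEpsilon (dn : ℝ → ℝ) (z : ℝ) : ℝ := ∫ t in (0:ℝ)..z, dn t ^ 2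

/-- A multiple of the reduction-of-order solution `w(z) ∫ dy / w(y)²` of `L₊ y = 0`, `w = sn cn`,
plus a multiple of `w`, in a closed form that is smooth across the zeros of `w`. -/
noncomputable def secondSolution (k : ℝ) (sn cn dn : ℝ → ℝ) (z : ℝ) : ℝ :=
  (2 * (1 - k ^ 2) * z + (k ^ 2 - 2) * jacobiEpsilon dn z) * (sn z * cn z)
    + (k ^ 2 - 1) * dn z + (2 - k ^ 2) * (dn z * sn z ^ 2)

noncomputable def secondSolutionDeriv (k : ℝ) (sn cn dn : ℝ → ℝ) (z : ℝ) : ℝ :=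
  (2 * (1 - k ^ 2) + (k ^ 2 - 2) * dn z ^ 2) * (sn z * cn z)
    + (2 * (1 - k ^ 2) * z + (k ^ 2 - 2) * jacobiEpsilon dn z) * (dn z * (cn z ^ 2 - sn z ^ 2))
    + ((4 - k ^ 2 - k ^ 4) * (sn z * cn z) + (3 * k ^ 4 - 6 * k ^ 2) * (sn z ^ 3 * cn z))

namespace IsJacobiElliptic

variable {k : ℝ} {sn cn dn : ℝ → ℝ}

lemma isHillSolution_sn_mul_cn (h : IsJacobiElliptic k sn cn dn) :
    IsHillSolution (lpPotential k dn) (fun z => sn z * cn z)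
      (fun z => dn z * (cn z ^ 2 - sn z ^ 2)) where
  hasDerivAt z := ((h.hasDerivAt_sn z).fun_mul (h.hasDerivAt_cn z)).congr_deriv (by ring)
  hasDerivAt_deriv z := ((h.hasDerivAt_dn z).fun_mul
    (((h.hasDerivAt_cn z).fun_pow 2).fun_sub ((h.hasDerivAt_sn z).fun_pow 2))).congr_deriv (by
      simp only [lpPotential]
      linear_combination (-(k ^ 2 * sn z * cn z)) * h.sn_sq_add_cn_sq z
        + (2 * sn z * cn z) * h.dn_sq z)

lemma hasDerivAt_jacobiEpsilon (h : IsJacobiElliptic k sn cn dn) (z : ℝ) :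
    HasDerivAt (jacobiEpsilon dn) (dn z ^ 2) z :=
  ((h.continuous_dn.pow 2).integral_hasStrictDerivAt 0 z).hasDerivAt

lemma isHillSolution_secondSolution (h : IsJacobiElliptic k sn cn dn) :
    IsHillSolution (lpPotential k dn) (secondSolution k sn cn dn)
      (secondSolutionDeriv k sn cn dn) := by
  have hg z : HasDerivAt (fun z => 2 * (1 - k ^ 2) * z + (k ^ 2 - 2) * jacobiEpsilon dn z)
      (2 * (1 - k ^ 2) + (k ^ 2 - 2) * dn z ^ 2) z :=
    (((hasDerivAt_id z).const_mul _).add ((h.hasDerivAt_jacobiEpsilon z).const_mul _)).congr_deriv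
      (by simp)
  have hg' z := (((h.hasDerivAt_dn z).fun_pow 2).const_mul (k ^ 2 - 2)).const_add (2 * (1 - k ^ 2))
  have hw := h.isHillSolution_sn_mul_cn
  refine ⟨fun z => ?_, fun z => ?_⟩
  · refine ((((hg z).fun_mul (hw.hasDerivAt z)).add ((h.hasDerivAt_dn z).const_mul (k ^ 2 - 1))).add
      (((h.hasDerivAt_dn z).fun_mul ((h.hasDerivAt_sn z).fun_pow 2)).const_mul
        (2 - k ^ 2))).congr_deriv ?_
    simp only [secondSolutionDeriv]
    push_cast
    linear_combination (-((2 * k ^ 2 - 4) * (sn z * cn z))) * h.dn_sq z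
  · refine ((((hg' z).fun_mul (hw.hasDerivAt z)).add ((hg z).fun_mul (hw.hasDerivAt_deriv z))).add
      ((((h.hasDerivAt_sn z).fun_mul (h.hasDerivAt_cn z)).const_mul (4 - k ^ 2 - k ^ 4)).add
        ((((h.hasDerivAt_sn z).fun_pow 3).fun_mul (h.hasDerivAt_cn z)).const_mul
          (3 * k ^ 4 - 6 * k ^ 2)))).congr_deriv ?_
    simp only [secondSolution, lpPotential]
    push_cast
    linear_combination
      (8 * dn z - 5 * k ^ 2 * dn z - k ^ 4 * dn z - 4 * dn z ^ 3 + 2 * k ^ 2 * dn z ^ 3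
        - 14 * k ^ 2 * sn z ^ 2 * dn z + 7 * k ^ 4 * sn z ^ 2 * dn z) * h.sn_sq_add_cn_sq z
      + (-10 * dn z + 8 * k ^ 2 * dn z + 20 * sn z ^ 2 * dn z
        - 10 * k ^ 2 * sn z ^ 2 * dn z) * h.dn_sq z

lemma secondSolution_zero (h : IsJacobiElliptic k sn cn dn) :
    secondSolution k sn cn dn 0 = k ^ 2 - 1 := by
  simp [secondSolution, h.sn_zero, h.dn_zero]

lemma secondSolutionDeriv_zero (h : IsJacobiElliptic k sn cn dn) :
    secondSolutionDeriv k sn cn dn 0 = 0 := by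
  simp [secondSolutionDeriv, jacobiEpsilon, h.sn_zero]

lemma secondSolutionDeriv_two_mul_ellipticK (h : IsJacobiElliptic k sn cn dn) (hk : k ^ 2 < 1) :
    secondSolutionDeriv k sn cn dn (2 * ellipticK k)
      = 2 * (1 - k ^ 2) * (2 * ellipticK k) + (k ^ 2 - 2) * (2 * ellipticE k) := by
  simp [secondSolutionDeriv, jacobiEpsilon, h.integral_dn_sq_two_mul_ellipticK hk,
    h.sn_two_mul_ellipticK hk, h.cn_two_mul_ellipticK hk, h.dn_two_mul_ellipticK hk]

end IsJacobiElliptic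

/-- every 2K-periodic H² (here C²) solution of L₊v = 0 is a constant
multiple of sn·cn. -/
theorem stmt_10 (k : ℝ) (hk0 : 0 < k) (hk1 : k < 1)
    (sn cn dn : ℝ → ℝ)
    (hsn0 : sn 0 = 0) (hcn0 : cn 0 = 1) (hdn0 : dn 0 = 1)
    (hsn' : ∀ z, HasDerivAt sn (cn z * dn z) z)
    (hcn' : ∀ z, HasDerivAt cn (-(sn z * dn z)) z)
    (hdn' : ∀ z, HasDerivAt dn (-(k ^ 2 * sn z * cn z)) z)
    (v : ℝ → ℝ) (hv : ContDiff ℝ 2 v)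
    (hper : ∀ z, v (z + 2 * ellipticK k) = v z)
    (hsol : ∀ z, Lp k dn v z = 0) :
    ∃ c : ℝ, ∀ z, v z = c * (sn z * cn z) := by
  have hk : k ^ 2 < 1 := by nlinarith
  have h : IsJacobiElliptic k sn cn dn := ⟨hsn0, hcn0, hdn0, hsn', hcn', hdn'⟩
  have hvsol : IsHillSolution (lpPotential k dn) v (deriv v) :=
    .of_contDiff hv fun z => Lp_eq_zero_iff.1 (hsol z)
  have hvT : deriv v (2 * ellipticK k) = deriv v 0 := by
    simpa [deriv_comp_add_const] using congrArg (deriv · 0) (funext hper)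
  refine h.isHillSolution_secondSolution.exists_eq_const_mul h.isHillSolution_sn_mul_cn hvsol
    ?_ hvT ?_ ?_
  · rw [h.secondSolution_zero, h.secondSolutionDeriv_zero, hsn0, hcn0, hdn0]
    nlinarith
  · simp [h.sn_two_mul_ellipticK hk, h.cn_two_mul_ellipticK hk, h.dn_two_mul_ellipticK hk,
      hsn0, hcn0, hdn0]
  · rw [h.secondSolutionDeriv_two_mul_ellipticK hk, h.secondSolutionDeriv_zero]
    linarith [two_mul_one_sub_sq_mul_ellipticK_lt hk0.ne' hk]
end
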